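/- arXiv:1507.06187 — 3 statements merged into one kernel-verified Lean document; each statement's English description precedes it below -/
import Mathlib

section
/- Every countably infinite graph in which every two distinct vertices are joined by infinitely many pairwise internally disjoint finite paths, and which is connected on all of its vertices (i.e., the whole vertex set is ω-connected), admits an enumeration v_0, v_1, v_2, ... of all its vertices such that consecutive vertices are adjacent (i.e., the graph contains a Hamiltonian path of order type ω). -/
open Cardinal

universe u

variable {V : Type u}

/-- Two walks between the same endpoints intersect only in the endpoints. -/
def IntDisjoint {G : SimpleGraph V} {v w : V} (p q : G.Walk v w) : Prop :=
  ∀ x, x ∈ p.support → x ∈ q.support → x = v ∨ x = w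

/-- `A` is κ-unseparable in `G`: any two distinct vertices of `A` are joined by
κ-many pairwise internally disjoint finite paths. -/
def Unseparable (G : SimpleGraph V) (A : Set V) (κ : Cardinal.{u}) : Prop :=
  ∀ v ∈ A, ∀ w ∈ A, v ≠ w →
    ∃ P : Set (G.Path v w), κ ≤ #P ∧
      ∀ p ∈ P, ∀ q ∈ P, p ≠ q → IntDisjoint (p : G.Path v w).1 (q : G.Path v w).1

/-- A path in Rado's sense inside the graph `G`: a set of vertices together with a
well-ordering such that the set of earlier neighbours of each vertex is cofinal below it. -/
structure RadoPath (G : SimpleGraph V) where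
  verts : Set V
  lt : verts → verts → Prop
  wo : IsWellOrder verts lt
  cofinal : ∀ v x : verts, lt x v → ∃ w : verts, G.Adj ↑w ↑v ∧ lt w v ∧ ¬ lt w x

/-- The order type of a Rado path. -/
noncomputable def RadoPath.otype {G : SimpleGraph V} (P : RadoPath G) : Ordinal.{u} :=
  @Ordinal.type P.verts P.lt P.wo

/-- `P` is concentrated on `A`: for every limit point `y` of `P` and every `x` below `y`,
the interval `[x, y)` contains a neighbour of `y` lying in `A`. -/
def RadoPath.ConcentratedOn {G : SimpleGraph V} (P : RadoPath G) (A : Set V) : Prop :=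
  ∀ y : P.verts, ((∃ x, P.lt x y) ∧ ∀ x, P.lt x y → ∃ z, P.lt x z ∧ P.lt z y) →
    ∀ x : P.verts, P.lt x y →
      ∃ w : P.verts, (↑w : V) ∈ A ∧ G.Adj ↑w ↑y ∧ ¬ P.lt w x ∧ P.lt w y

/-- The subgraph of `G` consisting of the edges of colour `i`. -/
def colGraph (G : SimpleGraph V) {r : ℕ} (c : Sym2 V → Fin r) (i : Fin r) :
    SimpleGraph V where
  Adj a b := G.Adj a b ∧ c s(a, b) = i
  symm := by
    constructor
    intro a b h
    refine ⟨h.1.symm, ?_⟩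
    rw [Sym2.eq_swap]
    exact h.2
  loopless := by constructor; intro a h; exact G.ne_of_adj h.1 rfl

/-- The restriction of `G` to the vertices in `S` (as a graph on the same vertex type). -/
def restrictTo (G : SimpleGraph V) (S : Set V) : SimpleGraph V where
  Adj a b := G.Adj a b ∧ a ∈ S ∧ b ∈ S
  symm := by constructor; intro a b h; exact ⟨h.1.symm, h.2.2, h.2.1⟩
  loopless := by constructor; intro a h; exact G.ne_of_adj h.1 rfl

/-- The common neighbourhood `N_G[X] = ⋂_{x ∈ X} N_G(x)`. -/
def commonNbhd (G : SimpleGraph V) (X : Set V) : Set V :=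
  {v | ∀ x ∈ X, G.Adj x v}

/-- `G` is κ-complete: it has at least κ vertices and every vertex has fewer than κ
non-neighbours. -/
def KComplete (G : SimpleGraph V) (κ : Cardinal.{u}) : Prop :=
  κ ≤ #V ∧ ∀ x : V, #{v : V | ¬ G.Adj x v} < κ

/-- `G` is of type `H_{κ,κ}` with decomposition `(A, B)`. -/
def IsHDecomp (G : SimpleGraph V) (κ : Cardinal.{u}) (A B : Set V) : Prop :=
  ∃ a b : Ordinal.{u} → V,
    Set.InjOn a (Set.Iio κ.ord) ∧ Set.InjOn b (Set.Iio κ.ord) ∧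
    a '' Set.Iio κ.ord = A ∧ b '' Set.Iio κ.ord = B ∧
    ∀ ξ ζ : Ordinal.{u}, ξ ≤ ζ → ζ < κ.ord → G.Adj (a ξ) (b ζ)

/-- `G` is of type `H_{κ,κ}` with main class `A`. -/
def IsHType (G : SimpleGraph V) (κ : Cardinal.{u}) (A : Set V) : Prop :=
  ∃ B : Set V, IsHDecomp G κ A B

/-- A finite family of increasing covers, witnessing that a set is (𝒜,κ)-centered. -/
structure CenteredWitness (V : Type u) where
  I : Type
  fin : Finite I
  lam : I → Ordinal.{u}
  fam : I → Ordinal.{u} → Set V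

/-- An 𝒜-box: the intersection `⋂_{i ∈ I} A^i_{f i}`. -/
def CenteredWitness.Box (𝒜 : CenteredWitness V) (f : 𝒜.I → Ordinal.{u}) : Set V :=
  ⋂ i, 𝒜.fam i (f i)

/-- `A` is (𝒜,κ)-centered in `G`. -/
def IsCentered (G : SimpleGraph V) (A : Set V) (𝒜 : CenteredWitness V)
    (κ : Cardinal.{u}) : Prop :=
  (∀ i, ∀ α β : Ordinal.{u}, α ≤ β → β < 𝒜.lam i → 𝒜.fam i α ⊆ 𝒜.fam i β) ∧
  (∀ i, A ⊆ ⋃ α ∈ Set.Iio (𝒜.lam i), 𝒜.fam i α) ∧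
  (∀ f : 𝒜.I → Ordinal.{u}, (∀ i, f i < 𝒜.lam i) → κ ≤ #(commonNbhd G (𝒜.Box f)))

/-- The set `S` carries a (finite or ω-type) path all of whose edges have colour `i`. -/
def CarriesPath {r : ℕ} (c : Sym2 ℕ → Fin r) (i : Fin r) (S : Set ℕ) : Prop :=
  (∃ l : List ℕ, l.Nodup ∧ (↑l.toFinset : Set ℕ) = S ∧
      l.Chain' (fun a b => c s(a, b) = i)) ∨
  (∃ f : ℕ → ℕ, Function.Injective f ∧ Set.range f = S ∧
      ∀ n : ℕ, c s(f n, f (n + 1)) = i)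

/-! An ω-connected graph stays connected after deleting finitely many vertices, so a finite path
can always be prolonged from its last vertex to any vertex not on it while avoiding the rest of
the path. Doing this greedily for an enumeration of the vertices gives a chain of paths, each a
prefix of the next, whose union is the Hamiltonian ω-path. -/

section PrefixChain

variable {α : Type*} {R : α → α → Prop} {L : ℕ → List α}

theorem isPrefix_of_le_of_succ (hpre : ∀ n, L n <+: L (n + 1)) {m n : ℕ} (hmn : m ≤ n) :
    L m <+: L n := by
  induction hmn with
  | refl => exact List.prefix_refl _
  | step _ ih => exact ih.trans (hpre _)

theorem getElem_eq_getElem_diag (hpre : ∀ n, L n <+: L (n + 1))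
    (hlen : ∀ n, n < (L n).length) (n k : ℕ) (hk : k < (L n).length) :
    (L n)[k] = (L k)[k]'(hlen k) := by
  rcases le_total k n with hkn | hnk
  · exact ((isPrefix_of_le_of_succ hpre hkn).getElem (hlen k)).symm
  · exact (isPrefix_of_le_of_succ hpre hnk).getElem hk

theorem exists_equiv_nat_of_isPrefix (hpre : ∀ n, L n <+: L (n + 1))
    (hlen : ∀ n, n < (L n).length) (hnodup : ∀ n, (L n).Nodup)
    (hchain : ∀ n, (L n).IsChain R) (hcover : ∀ a, ∃ n, a ∈ L n) :
    ∃ e : ℕ ≃ α, ∀ n, R (e n) (e (n + 1)) := by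
  set g : ℕ → α := fun k => (L k)[k]'(hlen k)
  have hg : ∀ n k (hk : k < (L n).length), (L n)[k] = g k :=
    getElem_eq_getElem_diag hpre hlen
  have hinj : Function.Injective g := by
    intro a b hab
    have ha : a < (L (max a b)).length := (le_max_left a b).trans_lt (hlen _)
    have hb : b < (L (max a b)).length := (le_max_right a b).trans_lt (hlen _)
    rw [← hg _ a ha, ← hg _ b hb] at hab
    exact (hnodup _).getElem_inj_iff.1 hab
  have hsurj : Function.Surjective g := by
    intro a
    obtain ⟨n, hn⟩ := hcover a
    obtain ⟨i, hi, rfl⟩ := List.getElem_of_mem hn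
    exact ⟨i, (hg n i hi).symm⟩
  refine ⟨Equiv.ofBijective g ⟨hinj, hsurj⟩, fun n => ?_⟩
  have hn : n + 1 < (L (n + 1)).length := hlen _
  have := List.isChain_iff_getElem.1 (hchain (n + 1)) n hn
  rwa [hg _ n (by omega), hg _ (n + 1) hn] at this

theorem exists_equiv_nat_of_extend [Countable α] [Infinite α]
    (hext : ∀ l : List α, l.Nodup → l.IsChain R → ∀ a,
      ∃ l' : List α, l <+: l' ∧ l'.Nodup ∧ l'.IsChain R ∧ a ∈ l') :
    ∃ e : ℕ ≃ α, ∀ n, R (e n) (e (n + 1)) := by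
  obtain ⟨e₀⟩ : Nonempty (ℕ ≃ α) := nonempty_equiv_of_countable
  have hext' : ∀ (l : {l : List α // l.Nodup ∧ l.IsChain R}) (a : α),
      ∃ l' : {l : List α // l.Nodup ∧ l.IsChain R}, l.1 <+: l'.1 ∧ a ∈ l'.1 := by
    rintro ⟨l, hnodup, hchain⟩ a
    obtain ⟨l', hpre, hnodup', hchain', ha⟩ := hext l hnodup hchain a
    exact ⟨⟨l', hnodup', hchain'⟩, hpre, ha⟩
  choose f hf using hext'
  let L : ℕ → {l : List α // l.Nodup ∧ l.IsChain R} := fun n =>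
    Nat.rec (f ⟨[], List.nodup_nil, List.isChain_nil⟩ (e₀ 0))
      (fun n l => f l (e₀ (n + 1))) n
  have hpre : ∀ n, (L n).1 <+: (L (n + 1)).1 := fun n => (hf _ _).1
  have hmem : ∀ n, e₀ n ∈ (L n).1 := by
    rintro (_ | n)
    exacts [(hf _ _).2, (hf _ _).2]
  have hlen : ∀ n, n < (L n).1.length := by
    intro n
    have hsub : (List.range (n + 1)).map e₀ ⊆ (L n).1 := by
      intro a ha
      obtain ⟨k, hk, rfl⟩ := List.mem_map.1 ha
      have hkn : k ≤ n := Nat.lt_succ_iff.1 (List.mem_range.1 hk)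
      exact (isPrefix_of_le_of_succ hpre hkn).subset (hmem k)
    simpa using ((List.nodup_range.map e₀.injective).subperm hsub).length_le
  exact exists_equiv_nat_of_isPrefix (L := fun n => (L n).1) hpre hlen
    (fun n => (L n).2.1) (fun n => (L n).2.2)
    (fun a => ⟨e₀.symm a, by simpa using hmem (e₀.symm a)⟩)

end PrefixChain

section Unseparable

variable {G : SimpleGraph V} {A : Set V}

theorem Unseparable.exists_path_avoiding (h : Unseparable G A ℵ₀) {v w : V} (hv : v ∈ A)
    (hw : w ∈ A) (hvw : v ≠ w) {F : Set V} (hF : F.Finite) (hvF : v ∉ F) (hwF : w ∉ F) :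
    ∃ p : G.Walk v w, p.IsPath ∧ ∀ x ∈ p.support, x ∉ F := by
  obtain ⟨P, hP, hdisj⟩ := h v hv w hw hvw
  have hPinf : P.Infinite := Set.infinite_coe_iff.1 (Cardinal.infinite_iff.2 hP)
  -- internally disjoint paths share no vertex of `F`, so each vertex of `F` lies on at most one
  have hmeet : (⋃ x ∈ F, {p ∈ P | x ∈ (p : G.Walk v w).support}).Finite := by
    refine hF.biUnion fun x hx => Set.Subsingleton.finite ?_
    rintro p ⟨hpP, hxp⟩ q ⟨hqP, hxq⟩
    by_contra hpq
    rcases hdisj p hpP q hqP hpq x hxp hxq with rfl | rfl <;> contradiction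
  obtain ⟨p, hpP, hpF⟩ := (hPinf.sdiff hmeet).nonempty
  simp only [Set.mem_iUnion, Set.mem_ofPred_eq, not_exists, not_and] at hpF
  exact ⟨p, p.2, fun x hxp hxF => hpF x hxF hpP hxp⟩

theorem Unseparable.exists_isPrefix_isChain_adj (h : Unseparable G Set.univ ℵ₀) {l : List V}
    (hnodup : l.Nodup) (hchain : l.IsChain G.Adj) (u : V) :
    ∃ l' : List V, l <+: l' ∧ l'.Nodup ∧ l'.IsChain G.Adj ∧ u ∈ l' := by
  by_cases hul : u ∈ l
  · exact ⟨l, List.prefix_refl l, hnodup, hchain, hul⟩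
  rcases l.eq_nil_or_concat' with rfl | ⟨l₀, v, rfl⟩
  · exact ⟨[u], List.nil_prefix, List.nodup_singleton u, List.isChain_singleton u, by simp⟩
  have hvl₀ : v ∉ l₀ := fun hv =>
    (List.nodup_append.1 hnodup).2.2 v hv v (List.mem_singleton_self v) rfl
  have hul₀ : u ∉ l₀ := fun hu => hul (List.mem_append_left _ hu)
  obtain ⟨p, hp, hpl₀⟩ := h.exists_path_avoiding trivial trivial
    (fun hvu => hul (by simp [hvu])) (List.finite_toSet l₀) hvl₀ hul₀
  have hsupp : p.support = [v] ++ p.support.tail := p.cons_tail_support.symm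
  refine ⟨l₀ ++ [v] ++ p.support.tail, List.prefix_append _ _, ?_, ?_, ?_⟩
  · rw [List.append_assoc, ← hsupp, List.nodup_append]
    exact ⟨(List.nodup_append.1 hnodup).1, hp.support_nodup,
      fun a ha b hb hab => hpl₀ b hb (hab ▸ ha)⟩
  · exact hchain.append_overlap (hsupp ▸ p.isChain_adj_support) (List.cons_ne_nil v [])
  · rw [List.append_assoc, ← hsupp]
    exact List.mem_append_right _ p.end_mem_support

end Unseparable

/-- Every countably infinite ω-connected graph (every two distinct vertices
joined by infinitely many pairwise internally disjoint finite paths) has a Hamiltonian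
path of order type ω. -/
theorem stmt0 {V : Type} [Countable V] [Infinite V] (G : SimpleGraph V)
    (h : Unseparable G Set.univ ℵ₀) :
    ∃ e : ℕ ≃ V, ∀ n : ℕ, G.Adj (e n) (e (n + 1)) :=
  exists_equiv_nat_of_extend fun _ hnodup hchain u =>
    h.exists_isPrefix_isChain_adj hnodup hchain u
end

section
/- Let H be a graph of type H_{κ,κ} with main class A, for any infinite cardinal κ. Then H contains a path (in Rado's sense) of order type κ which covers A and is concentrated on A. -/
open Cardinal

universe u

variable {V : Type u}

/-!
Build, by transfinite recursion along `κ`, rungs `(a k_ξ, b h_ξ)` of pairwise distinct vertices: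
`k_ξ` is the least index whose `a`-vertex has not been used yet, and `h_ξ ≥ k_ξ` is an index of an
unused `b`-vertex. Fewer than `κ` vertices are used before any stage, so both indices exist. The
indices `k_ξ` increase, so `a k_η` is adjacent to `b h_ξ` whenever `η ≤ ξ`, and choosing them least
forces every `a`-vertex to be used. The ladder `b h_0, a k_0, b h_1, a k_1, …` is then a Rado path
of order type `2 * κ.ord = κ.ord`: every `b h_ξ` is adjacent to all earlier `a`-vertices, every
`a k_ξ` to its predecessor, and the limit points are `b`-vertices, whose cofinal neighbours lie in
`A`.
-/

open Function Set
open scoped Ordinal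

namespace RadoPath

variable {G : SimpleGraph V} {ι : Type u} [LinearOrder ι] [WellFoundedLT ι]

noncomputable def ofInjective (f : ι → V) (hf : Injective f)
    (hcof : ∀ i j, i < j → ∃ k, G.Adj (f k) (f j) ∧ i ≤ k ∧ k < j) : RadoPath G where
  verts := range f
  lt s t := (Equiv.ofInjective f hf).symm s < (Equiv.ofInjective f hf).symm t
  wo := (RelIso.preimage (Equiv.ofInjective f hf).symm (· < ·)).toRelEmbedding.isWellOrder
  cofinal v x hxv := by
    obtain ⟨k, hadj, hxk, hkv⟩ := hcof _ _ hxv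
    refine ⟨⟨f k, k, rfl⟩, ?_, ?_, ?_⟩ <;>
      simp only [Equiv.ofInjective_symm_apply, not_lt]
    · rwa [← Equiv.apply_ofInjective_symm hf v]
    · exact hkv
    · exact hxk

variable (f : ι → V) (hf : Injective f)
  (hcof : ∀ i j, i < j → ∃ k, G.Adj (f k) (f j) ∧ i ≤ k ∧ k < j)

theorem otype_ofInjective : (ofInjective f hf hcof).otype = typeLT ι :=
  have := (ofInjective f hf hcof).wo
  Ordinal.type_eq.2 ⟨RelIso.preimage (Equiv.ofInjective f hf).symm (· < ·)⟩

theorem concentratedOn_ofInjective {A : Set V}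
    (hA : ∀ i j, i < j → (∀ l < j, ∃ m, l < m ∧ m < j) →
      ∃ k, f k ∈ A ∧ G.Adj (f k) (f j) ∧ i ≤ k ∧ k < j) :
    (ofInjective f hf hcof).ConcentratedOn A := by
  set e := Equiv.ofInjective f hf
  intro y ⟨_, hlim⟩ x hxy
  have hlim' : ∀ l < e.symm y, ∃ m, l < m ∧ m < e.symm y := by
    intro l hl
    obtain ⟨z, hlz, hzy⟩ := hlim (e l) (by rwa [← e.symm_apply_apply l] at hl)
    exact ⟨e.symm z, by rwa [← e.symm_apply_apply l], hzy⟩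
  obtain ⟨k, hkA, hadj, hxk, hky⟩ := hA _ _ hxy hlim'
  refine ⟨e k, hkA, ?_, ?_, ?_⟩ <;> simp only [ofInjective, e, Equiv.ofInjective_apply,
    Equiv.ofInjective_symm_apply, not_lt]
  · rwa [← Equiv.apply_ofInjective_symm hf y]
  · exact hxk
  · exact hky

end RadoPath

theorem RadoPath.ConcentratedOn.mono {G : SimpleGraph V} {P : RadoPath G} {A A' : Set V}
    (hP : P.ConcentratedOn A) (hA : A ⊆ A') : P.ConcentratedOn A' := fun y hy x hxy =>
  (hP y hy x hxy).imp fun _ hw => ⟨hA hw.1, hw.2⟩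

section Ladder

variable {G : SimpleGraph V} {ι : Type u} (x y : ι → V)

def ladder (p : ι ×ₗ Bool) : V := cond (ofLex p).2 (y (ofLex p).1) (x (ofLex p).1)

theorem range_ladder : range (ladder x y) = range x ∪ range y := by
  ext v
  constructor
  · rintro ⟨⟨i, _ | _⟩, rfl⟩
    exacts [.inl ⟨i, rfl⟩, .inr ⟨i, rfl⟩]
  · rintro (⟨i, rfl⟩ | ⟨i, rfl⟩)
    exacts [⟨toLex (i, false), rfl⟩, ⟨toLex (i, true), rfl⟩]

variable [LinearOrder ι]

theorem ladder_exists_adj_of_lt (hadj : ∀ i j, i ≤ j → G.Adj (y i) (x j)) {p q : ι ×ₗ Bool}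
    (hpq : p < q) :
    ∃ r, G.Adj (ladder x y r) (ladder x y q) ∧ p ≤ r ∧ r < q ∧
      ((ofLex q).2 = false → (ofLex r).2 = true) := by
  obtain ⟨⟨i, s⟩, rfl⟩ := toLex.surjective p
  obtain ⟨⟨j, _ | _⟩, rfl⟩ := toLex.surjective q
  · have hij : i < j := by
      rcases Prod.Lex.toLex_lt_toLex.1 hpq with h | ⟨-, h⟩
      · exact h
      · cases s <;> cases h
    refine ⟨toLex (i, true), hadj i j hij.le, ?_, Prod.Lex.toLex_lt_toLex.2 (.inl hij),
      fun _ => rfl⟩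
    exact Prod.Lex.toLex_le_toLex.2 (.inr ⟨rfl, Bool.le_true s⟩)
  · refine ⟨toLex (j, false), (hadj j j le_rfl).symm, ?_,
      Prod.Lex.toLex_lt_toLex.2 (.inr ⟨rfl, Bool.false_lt_true⟩), nofun⟩
    rcases Prod.Lex.toLex_lt_toLex.1 hpq with h | ⟨rfl, h⟩
    · exact Prod.Lex.toLex_le_toLex.2 (.inl h)
    · cases s <;> cases h
      exact le_rfl

theorem snd_eq_false_of_forall_exists_between {q : ι ×ₗ Bool}
    (hq : ∀ l < q, ∃ m, l < m ∧ m < q) : (ofLex q).2 = false := by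
  obtain ⟨⟨j, _ | _⟩, rfl⟩ := toLex.surjective q
  · rfl
  · obtain ⟨m, hm, hmq⟩ := hq (toLex (j, false))
      (Prod.Lex.toLex_lt_toLex.2 (.inr ⟨rfl, Bool.false_lt_true⟩))
    obtain ⟨⟨k, t⟩, rfl⟩ := toLex.surjective m
    rw [Prod.Lex.toLex_lt_toLex] at hm hmq
    rcases hm with h | ⟨rfl, h⟩ <;> rcases hmq with h' | ⟨h'', h'⟩
    · exact absurd h (lt_asymm h')
    · exact absurd h (h''.symm ▸ lt_irrefl j)
    · exact absurd h' (lt_irrefl _)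
    · cases t <;> cases h; cases h'

variable [WellFoundedLT ι]

theorem type_lex_bool : typeLT (ι ×ₗ Bool) = 2 * typeLT ι := by
  have e : ι ×ₗ Bool ≃o ι ×ₗ ULift.{u} Bool :=
    Prod.Lex.prodLexCongr (OrderIso.refl ι) ⟨Equiv.ulift.symm, Iff.rfl⟩
  rw [Ordinal.type_eq.2 ⟨e.toRelIsoLT⟩]
  change Ordinal.type (Prod.Lex (· < ·) (· < ·)) = _
  rw [Ordinal.type_prod_lex, Ordinal.type_lt_ulift, Ordinal.type_fintype]
  simp

theorem exists_radoPath_ladder (hinj : Injective (ladder x y))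
    (hadj : ∀ i j, i ≤ j → G.Adj (y i) (x j)) :
    ∃ P : RadoPath G, P.otype = 2 * typeLT ι ∧ P.verts = range x ∪ range y ∧
      P.ConcentratedOn (range y) := by
  have hcof : ∀ p q, p < q → ∃ r, G.Adj (ladder x y r) (ladder x y q) ∧ p ≤ r ∧ r < q :=
    fun p q hpq => (ladder_exists_adj_of_lt x y hadj hpq).imp fun _ hr => ⟨hr.1, hr.2.1, hr.2.2.1⟩
  refine ⟨.ofInjective _ hinj hcof, ?_, range_ladder x y, ?_⟩
  · rw [RadoPath.otype_ofInjective, type_lex_bool]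
  · refine RadoPath.concentratedOn_ofInjective _ _ _ fun p q hpq hq => ?_
    obtain ⟨r, hrq, hpr, hr, hsnd⟩ := ladder_exists_adj_of_lt x y hadj hpq
    refine ⟨r, ⟨(ofLex r).1, ?_⟩, hrq, hpr, hr⟩
    simp [ladder, hsnd (snd_eq_false_of_forall_exists_between hq)]

end Ladder

section Greedy

variable {ι : Type u}

theorem exists_le_notMem_of_injective [LinearOrder ι] (hinf : ℵ₀ ≤ #ι) {f : ι → V}
    (hf : Injective f) {c : ι} (hc : #(Iio c) < #ι) {U : Set V} (hU : #U < #ι) :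
    ∃ j, c ≤ j ∧ f j ∉ U := by
  by_contra! h
  have hIci : #(Ici c) < #ι :=
    calc #(Ici c) = #(f '' Ici c) := (mk_image_eq hf).symm
      _ ≤ #U := mk_le_mk_of_subset (image_subset_iff.2 h)
      _ < #ι := hU
  have : #ι < #ι :=
    calc #ι = #(Iio c ∪ Ici c : Set ι) := by rw [Iio_union_Ici, mk_univ]
      _ ≤ #(Iio c) + #(Ici c) := mk_union_le _ _
      _ < #ι := add_lt_of_lt hinf hc hIci
  exact this.false

variable [ConditionallyCompleteLinearOrderBot ι]

noncomputable def freshIndex (f : ι → V) (c : ι) (U : Set V) : ι :=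
  sInf {j | c ≤ j ∧ f j ∉ U}

theorem freshIndex_le {f : ι → V} {c j : ι} {U : Set V} (hj : c ≤ j) (hU : f j ∉ U) :
    freshIndex f c U ≤ j :=
  csInf_le' ⟨hj, hU⟩

variable [WellFoundedLT ι]

theorem freshIndex_spec (hinf : ℵ₀ ≤ #ι) {f : ι → V} (hf : Injective f) {c : ι}
    (hc : #(Iio c) < #ι) {U : Set V} (hU : #U < #ι) :
    c ≤ freshIndex f c U ∧ f (freshIndex f c U) ∉ U :=
  csInf_mem (exists_le_notMem_of_injective hinf hf hc hU)

variable (a b : ι → V)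

noncomputable def rung : ι → ι × ι :=
  wellFounded_lt.fix fun i F =>
    let U := {v | ∃ j, ∃ hj : j < i, v = a (F j hj).1 ∨ v = b (F j hj).2}
    (freshIndex a ⊥ U, freshIndex b (freshIndex a ⊥ U) (insert (a (freshIndex a ⊥ U)) U))

noncomputable def rungA (i : ι) : V := a (rung a b i).1

noncomputable def rungB (i : ι) : V := b (rung a b i).2

def usedBefore (i : ι) : Set V := {v | ∃ j, ∃ _ : j < i, v = rungA a b j ∨ v = rungB a b j}

theorem rung_eq (i : ι) : rung a b i =
    (freshIndex a ⊥ (usedBefore a b i), freshIndex b (freshIndex a ⊥ (usedBefore a b i))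
      (insert (a (freshIndex a ⊥ (usedBefore a b i))) (usedBefore a b i))) := by
  rw [rung, WellFounded.fix_eq]
  rfl

theorem usedBefore_mono {i j : ι} (hji : j ≤ i) : usedBefore a b j ⊆ usedBefore a b i :=
  fun _ ⟨k, hk, hv⟩ => ⟨k, hk.trans_le hji, hv⟩

theorem ladder_mem_usedBefore {p : ι ×ₗ Bool} {i : ι} (hp : (ofLex p).1 < i) :
    ladder (rungB a b) (rungA a b) p ∈ usedBefore a b i := by
  obtain ⟨⟨j, _ | _⟩, rfl⟩ := toLex.surjective p
  exacts [⟨j, hp, .inr rfl⟩, ⟨j, hp, .inl rfl⟩]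

theorem usedBefore_subset_range_ladder (i : ι) :
    usedBefore a b i ⊆ range (ladder (rungB a b) (rungA a b)) := by
  rintro v ⟨j, -, rfl | rfl⟩
  exacts [⟨toLex (j, true), rfl⟩, ⟨toLex (j, false), rfl⟩]

variable {a b} (hinf : ℵ₀ ≤ #ι) (hι : (#ι).ord = typeLT ι)
include hinf hι

theorem mk_usedBefore_lt (i : ι) : #(usedBefore a b i) < #ι := by
  have hsub : usedBefore a b i ⊆ rungA a b '' Iio i ∪ rungB a b '' Iio i := by
    rintro v ⟨j, hj, rfl | rfl⟩
    exacts [.inl ⟨j, hj, rfl⟩, .inr ⟨j, hj, rfl⟩]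
  calc #(usedBefore a b i) ≤ #(rungA a b '' Iio i) + #(rungB a b '' Iio i) :=
        (mk_le_mk_of_subset hsub).trans (mk_union_le _ _)
    _ ≤ #(Iio i) + #(Iio i) := add_le_add mk_image_le mk_image_le
    _ < #ι := add_lt_of_lt hinf (mk_Iio_lt i hι) (mk_Iio_lt i hι)

variable (ha : Injective a) (hb : Injective b)
include ha hb

theorem rung_spec (i : ι) :
    rungA a b i ∉ usedBefore a b i ∧ (rung a b i).1 ≤ (rung a b i).2 ∧
      rungB a b i ∉ usedBefore a b i ∧ rungB a b i ≠ rungA a b i := by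
  have hU := mk_usedBefore_lt hinf hι (a := a) (b := b) i
  obtain ⟨-, hA⟩ := freshIndex_spec hinf ha (mk_Iio_lt ⊥ hι) hU
  have hU' : #(insert (a (freshIndex a ⊥ (usedBefore a b i))) (usedBefore a b i) : Set V) < #ι :=
    mk_insert_le.trans_lt (add_lt_of_lt hinf hU (one_lt_aleph0.trans_le hinf))
  obtain ⟨hle, hB⟩ := freshIndex_spec hinf hb (mk_Iio_lt _ hι) hU'
  simp only [rungA, rungB, rung_eq a b i]
  exact ⟨hA, hle, fun h => hB (.inr h), fun h => hB (.inl h)⟩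

theorem rung_fst_mono : Monotone fun i => (rung a b i).1 := by
  intro j i hji
  show (rung a b j).1 ≤ _
  rw [rung_eq a b j]
  exact freshIndex_le bot_le fun h => (rung_spec hinf hι ha hb i).1 (usedBefore_mono a b hji h)

theorem injective_ladder_rung : Injective (ladder (rungB a b) (rungA a b)) := by
  refine Injective.of_lt_imp_ne fun p q hpq heq => ?_
  obtain ⟨⟨i, s⟩, rfl⟩ := toLex.surjective q
  obtain ⟨hA, -, hB, hBA⟩ := rung_spec hinf hι ha hb i
  rcases Prod.Lex.lt_iff.1 hpq with h | ⟨h, hs⟩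
  · have hused := ladder_mem_usedBefore a b h
    rw [heq] at hused
    cases s
    exacts [hB hused, hA hused]
  · obtain ⟨⟨j, t⟩, rfl⟩ := toLex.surjective p
    cases t <;> cases s <;> cases hs
    cases h
    exact hBA heq

theorem adj_rungA_rungB {G : SimpleGraph V} (hadj : ∀ i j, i ≤ j → G.Adj (a i) (b j))
    {i j : ι} (hij : i ≤ j) : G.Adj (rungA a b i) (rungB a b j) :=
  hadj _ _ ((rung_fst_mono hinf hι ha hb hij).trans (rung_spec hinf hι ha hb j).2.1)

theorem range_subset_range_ladder : range a ⊆ range (ladder (rungB a b) (rungA a b)) := by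
  rintro _ ⟨m, rfl⟩
  by_contra hm
  have hle : ∀ i, (rung a b i).1 ≤ m := fun i => by
    rw [rung_eq]
    exact freshIndex_le bot_le fun h => hm (usedBefore_subset_range_ladder a b i h)
  have hinj : Injective fun i => (⟨(rung a b i).1, hle i⟩ : Iic m) := fun i j hij =>
    congrArg (fun p => (ofLex p).1) <| injective_ladder_rung hinf hι ha hb
      (a₁ := toLex (i, true)) (a₂ := toLex (j, true)) (congrArg (a ∘ Subtype.val) hij)
  have : #ι < #ι :=
    calc #ι ≤ #(Iic m) := mk_le_of_injective hinj
      _ = #(insert m (Iio m) : Set ι) := by rw [Iio_insert]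
      _ ≤ #(Iio m) + 1 := mk_insert_le
      _ < #ι := add_lt_of_lt hinf (mk_Iio_lt m hι) (one_lt_aleph0.trans_le hinf)
  exact this.false

end Greedy

theorem IsHType.exists_injective_toType {G : SimpleGraph V} {κ : Cardinal.{u}} {A : Set V}
    (h : IsHType G κ A) : ∃ a b : κ.ord.ToType → V, Injective a ∧ Injective b ∧
      range a = A ∧ ∀ i j, i ≤ j → G.Adj (a i) (b j) := by
  obtain ⟨-, a, b, ha, hb, rfl, -, hadj⟩ := h
  let e : κ.ord.ToType ≃o Iio κ.ord := Ordinal.ToType.mk.symm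
  refine ⟨fun i => a (e i), fun i => b (e i), fun i j hij => ?_, fun i j hij => ?_, ?_,
    fun i j hij => hadj _ _ (e.monotone hij) (e j).2⟩
  · exact e.injective (Subtype.ext (ha (e i).2 (e j).2 hij))
  · exact e.injective (Subtype.ext (hb (e i).2 (e j).2 hij))
  · change range (a ∘ Subtype.val ∘ e) = _
    rw [range_comp, range_comp, e.range_eq, image_univ, Subtype.range_coe]

theorem Cardinal.two_mul_ord {κ : Cardinal.{u}} (hκ : ℵ₀ ≤ κ) : 2 * κ.ord = κ.ord :=
  Ordinal.mul_omega0_dvd (by norm_num) (Ordinal.natCast_lt_omega0 2)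
    (Ordinal.isSuccPrelimit_iff_omega0_dvd.1 (isSuccLimit_ord hκ).isSuccPrelimit)

/-- A graph of type H_{κ,κ} with main class `A` contains a Rado path of
order type κ which covers and is concentrated on `A`. -/
theorem stmt11 {V : Type u} (G : SimpleGraph V) (κ : Cardinal.{u}) (hκ : ℵ₀ ≤ κ)
    (A : Set V) (h : IsHType G κ A) :
    ∃ P : RadoPath G, P.otype = κ.ord ∧ A ⊆ P.verts ∧ P.ConcentratedOn A := by
  obtain ⟨a, b, ha, hb, rfl, hadj⟩ := h.exists_injective_toType
  have hinf : ℵ₀ ≤ #κ.ord.ToType := by rwa [mk_ord_toType]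
  have : Nonempty κ.ord.ToType := mk_ne_zero_iff.1 (aleph0_pos.trans_le hinf).ne'
  let := WellFoundedLT.toOrderBot κ.ord.ToType
  let := WellFoundedLT.conditionallyCompleteLinearOrderBot κ.ord.ToType
  have hι : (#κ.ord.ToType).ord = typeLT κ.ord.ToType := by
    rw [mk_ord_toType]
    exact (Ordinal.type_toType _).symm
  obtain ⟨P, hP, hverts, hconc⟩ := exists_radoPath_ladder _ _
    (injective_ladder_rung hinf hι ha hb) fun i j => adj_rungA_rungB hinf hι ha hb hadj
  refine ⟨P, ?_, ?_, hconc.mono ?_⟩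
  · rw [hP, Ordinal.type_toType, two_mul_ord hκ]
  · rw [hverts, ← range_ladder]
    exact range_subset_range_ladder hinf hι ha hb
  · rintro _ ⟨i, rfl⟩
    exact ⟨_, rfl⟩
end

section
/- Let κ be an infinite cardinal and G a κ-complete graph of size κ with an r-edge colouring, r finite. Then there is a colour i < r and a set A ⊆ V(G) of size κ such that A is κ-connected in colour i (any two distinct points of A are joined by κ-many pairwise internally disjoint finite paths within A, all of whose edges are coloured i). -/
open Cardinal

universe u

variable {V : Type u}

/-!
In a κ-complete graph of size κ the sets whose complement has fewer than κ elements form a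
filter; fix an ultrafilter `U` extending it. Every neighbourhood lies in `U`, so each vertex `v`
has a colour `φ v` whose neighbourhood in that colour lies in `U`, and `φ` is constant, say `i`,
on some `A ∈ U`. For distinct `v, w ∈ A` the vertices of `A` joined to both in colour `i` form a
set in `U`, hence of size at least κ, and each of them gives a path `v - u - w` of length two.
-/

theorem exists_ultrafilter_forall_mk_compl_lt_mem {α : Type u} {κ : Cardinal.{u}}
    (hκ : ℵ₀ ≤ κ) (hα : κ ≤ #α) :
    ∃ U : Ultrafilter α, ∀ s : Set α, #(sᶜ : Set α) < κ → s ∈ U := by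
  let F : Filter α := Filter.comk (fun s => #s < κ)
    (by rw [mk_eq_zero]; exact aleph0_pos.trans_le hκ)
    (fun t ht s hst => (mk_le_mk_of_subset hst).trans_lt ht)
    (fun s hs t ht => (mk_union_le s t).trans_lt (add_lt_of_lt hκ hs ht))
  have : F.NeBot := by
    refine Filter.neBot_iff.2 fun h => ?_
    have hempty : (∅ : Set α) ∈ F := h ▸ Filter.mem_bot
    rw [Filter.mem_comk, Set.compl_empty, mk_univ] at hempty
    exact hempty.not_ge hα
  exact ⟨Ultrafilter.of F, fun s hs => Ultrafilter.of_le F (Filter.mem_comk.2 hs)⟩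

theorem Ultrafilter.le_mk_of_mem {α : Type u} {κ : Cardinal.{u}} {U : Ultrafilter α}
    (hU : ∀ s : Set α, #(sᶜ : Set α) < κ → s ∈ U) {s : Set α} (hs : s ∈ U) : κ ≤ #s := by
  by_contra! h
  exact U.compl_notMem_iff.2 hs (hU _ (by rwa [compl_compl]))

namespace SimpleGraph

variable {G : SimpleGraph V}

def Path.viaVertex {v u w : V} (hvu : G.Adj v u) (huw : G.Adj u w) (hvw : v ≠ w) :
    G.Path v w :=
  ⟨.cons hvu (.cons huw .nil), by simp [hvu.ne, huw.ne, hvw]⟩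

theorem Path.support_viaVertex {v u w : V} (hvu : G.Adj v u) (huw : G.Adj u w)
    (hvw : v ≠ w) : (Path.viaVertex hvu huw hvw).1.support = [v, u, w] := rfl

theorem intDisjoint_viaVertex {v u₁ u₂ w : V} (hvu₁ : G.Adj v u₁) (hu₁w : G.Adj u₁ w)
    (hvu₂ : G.Adj v u₂) (hu₂w : G.Adj u₂ w) (hvw : v ≠ w) (hu : u₁ ≠ u₂) :
    IntDisjoint (Path.viaVertex hvu₁ hu₁w hvw).1 (Path.viaVertex hvu₂ hu₂w hvw).1 := by
  intro x hx₁ hx₂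
  simp only [Path.support_viaVertex, List.mem_cons, List.not_mem_nil, or_false] at hx₁ hx₂
  grind

end SimpleGraph

open SimpleGraph in
theorem unseparable_of_le_mk_commonNbhd {G : SimpleGraph V} {A : Set V}
    {κ : Cardinal.{u}} (h : ∀ v ∈ A, ∀ w ∈ A, v ≠ w → κ ≤ #(commonNbhd G {v, w})) :
    Unseparable G A κ := by
  intro v hv w hw hvw
  let p : commonNbhd G {v, w} → G.Path v w := fun u =>
    Path.viaVertex (u.2 v (by simp)) (u.2 w (by simp)).symm hvw
  have hp : Function.Injective p := fun u₁ u₂ hu => by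
    have := congrArg (fun q : G.Path v w => q.1.support) hu
    simp only [p, Path.support_viaVertex, List.cons.injEq] at this
    exact Subtype.ext this.2.1
  refine ⟨Set.range p, by rw [mk_range_eq p hp]; exact h v hv w hw hvw, ?_⟩
  rintro _ ⟨u₁, rfl⟩ _ ⟨u₂, rfl⟩ hne
  exact intDisjoint_viaVertex _ _ _ _ hvw fun hu => hne (congrArg p (Subtype.ext hu))

theorem exists_unseparable_colGraph_of_ultrafilter {G : SimpleGraph V}
    {κ : Cardinal.{u}} {r : ℕ} (c : Sym2 V → Fin r) (U : Ultrafilter V)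
    (hU : ∀ s ∈ U, κ ≤ #s) (hadj : ∀ v, ∀ᶠ u in U, G.Adj v u) :
    ∃ i : Fin r, ∃ A ∈ U, Unseparable (restrictTo (colGraph G c i) A) A κ := by
  have hcol : ∀ v, ∃ i, ∀ᶠ u in U, (colGraph G c i).Adj v u := fun v =>
    Ultrafilter.eventually_exists_iff.1 ((hadj v).mono fun u h => ⟨_, h, rfl⟩)
  choose φ hφ using hcol
  obtain ⟨i, hi⟩ : ∃ i, ∀ᶠ v in U, φ v = i :=
    Ultrafilter.eventually_exists_iff.1 (Filter.Eventually.of_forall fun v => ⟨φ v, rfl⟩)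
  refine ⟨i, {v | φ v = i}, hi, unseparable_of_le_mk_commonNbhd ?_⟩
  intro v hv w hw _
  refine (hU _ (((hv ▸ hφ v).and ((hw ▸ hφ w).and hi)))).trans (mk_le_mk_of_subset ?_)
  rintro u ⟨hvu, hwu, hu⟩ x (rfl | rfl)
  · exact ⟨hvu, hv, hu⟩
  · exact ⟨hwu, hw, hu⟩

theorem stmt18_general {V : Type u} (κ : Cardinal.{u}) (hκ : ℵ₀ ≤ κ) (G : SimpleGraph V)
    (hV : #V = κ) (hcomp : KComplete G κ)
    (r : ℕ) (c : Sym2 V → Fin r) :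
    ∃ i : Fin r, ∃ A : Set V, #A = κ ∧
      Unseparable (restrictTo (colGraph G c i) A) A κ := by
  obtain ⟨U, hU⟩ := exists_ultrafilter_forall_mk_compl_lt_mem hκ hcomp.1
  obtain ⟨i, A, hA, hsep⟩ := exists_unseparable_colGraph_of_ultrafilter c U
    (fun _ => U.le_mk_of_mem hU) (fun v => hU _ (hcomp.2 v))
  exact ⟨i, A, le_antisymm (hV ▸ mk_set_le A) (U.le_mk_of_mem hU hA), hsep⟩

/-- In any finitely edge coloured κ-complete graph of size κ there is a
set of size κ which is κ-connected in some colour. -/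
theorem stmt18 {V : Type u} (κ : Cardinal.{u}) (hκ : ℵ₀ ≤ κ) (G : SimpleGraph V)
    (hV : #V = κ) (hcomp : KComplete G κ)
    (r : ℕ) (hr : 0 < r) (c : Sym2 V → Fin r) :
    ∃ i : Fin r, ∃ A : Set V, #A = κ ∧
      Unseparable (restrictTo (colGraph G c i) A) A κ :=
  stmt18_general κ hκ G hV hcomp r c
end
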